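/- Let N = (V₀, g, A₁, A₂) and Ñ = (Ṽ₀, g̃, Ã₁, Ã₂) where (V₀, g) and (Ṽ₀, g̃) are finite-dimensional positive definite real inner product spaces, A₁, A₂ are algebraic curvature tensors on V₀ Einstein with constants a₁ and a₂ > 0, and Ã₁, Ã₂ are algebraic curvature tensors on Ṽ₀ Einstein with constants ã₁ and ã₂ > 0. Then the models M(N) and M(Ñ) are isomorphic if and only if there exist a linear isomorphism θ : V₀ → Ṽ₀ and a linear map T : V₀ → V₀ which is skew-adjoint with respect to g (g(Tv, w) + g(v, Tw) = 0 for all v, w) and satisfies g(Tv, Tv) < g(v, v) for all v ≠ 0, such that for all v, w, x, y ∈ V₀: g̃(θv, θw) = g(v, w) − g(Tv, Tw), and (Ã₁ + i·Ã₂)(θv, θw, θx, θy) = (A₁ + i·A₂)^ℂ(v + i·Tv, w + i·Tw, x + i·Tx, y + i·Ty), where (A₁ + i·A₂)^ℂ is the complex multilinear extension of A₁ + i·A₂ to (V₀ ⊗ ℂ)⁴. -/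

import Mathlib

open TensorProduct

/-- `f : W⁴ → ℝ` is multilinear over `ℝ` in each of its four slots. -/
def IsML {W : Type*} [AddCommGroup W] [Module ℝ W] (f : W → W → W → W → ℝ) : Prop :=
  (∀ x x' y z w, f (x + x') y z w = f x y z w + f x' y z w) ∧
  (∀ (c : ℝ) x y z w, f (c • x) y z w = c * f x y z w) ∧
  (∀ x y y' z w, f x (y + y') z w = f x y z w + f x y' z w) ∧
  (∀ (c : ℝ) x y z w, f x (c • y) z w = c * f x y z w) ∧
  (∀ x y z z' w, f x y (z + z') w = f x y z w + f x y z' w) ∧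
  (∀ (c : ℝ) x y z w, f x y (c • z) w = c * f x y z w) ∧
  (∀ x y z w w', f x y z (w + w') = f x y z w + f x y z w') ∧
  (∀ (c : ℝ) x y z w, f x y z (c • w) = c * f x y z w)

/-- The symmetries of the Riemann curvature tensor. -/
def IsCurvSym {W : Type*} [AddCommGroup W] [Module ℝ W] (f : W → W → W → W → ℝ) : Prop :=
  (∀ x y z w, f x y z w = - f y x z w) ∧
  (∀ x y z w, f x y z w = f z w x y) ∧
  (∀ x y z w, f x y z w + f y z x w + f z x y w = 0)

/-- An algebraic curvature tensor: a multilinear map with the curvature symmetries. -/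
def IsACT {W : Type*} [AddCommGroup W] [Module ℝ W] (f : W → W → W → W → ℝ) : Prop :=
  IsML f ∧ IsCurvSym f

/-- The defining value of `⟨ρ x, y⟩`: the trace of `z ↦ ½𝓡(z,x)y + ½𝓡(z,y)x`,
where `R` is the (curried) curvature operator. -/
noncomputable def ricciForm {V : Type*} [AddCommGroup V] [Module ℝ V]
    (R : V →ₗ[ℝ] V →ₗ[ℝ] V →ₗ[ℝ] V) (x y : V) : ℝ :=
  LinearMap.trace ℝ V
    (((1 : ℝ) / 2) • ((R.flip x).flip y) + ((1 : ℝ) / 2) • ((R.flip y).flip x))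

/-- The Jacobi--Ricci commuting identity of Lemma 1 (3). -/
def JRComm {V : Type*} [AddCommGroup V] [Module ℝ V]
    (A : V → V → V → V → ℝ) (ρ : V →ₗ[ℝ] V) : Prop :=
  ∀ v₁ v₂ v₃ v₄ : V,
    A (ρ v₁) v₂ v₃ v₄ = A v₁ (ρ v₂) v₃ v₄ ∧
    A v₁ (ρ v₂) v₃ v₄ = A v₁ v₂ (ρ v₃) v₄ ∧
    A v₁ v₂ (ρ v₃) v₄ = A v₁ v₂ v₃ (ρ v₄)

/-- The ℂ-valued tensor `A₁ + i·A₂`. -/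
noncomputable def acx {W : Type*} [AddCommGroup W] [Module ℝ W]
    (A₁ A₂ : W → W → W → W → ℝ) (x y z w : W) : ℂ :=
  (A₁ x y z w : ℂ) + Complex.I * (A₂ x y z w : ℂ)

/-- The complex multilinear extension `(A₁ + i·A₂)^ℂ` of `A₁ + i·A₂` to the
complexification of `W`, where `W × W` is identified with `W ⊗ ℂ` via
`(x⁺, x⁻) ↔ x⁺ + i·x⁻`. -/
noncomputable def acExt {W : Type*} [AddCommGroup W] [Module ℝ W]
    (A₁ A₂ : W → W → W → W → ℝ) (p q r s : W × W) : ℂ :=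
  acx A₁ A₂ p.1 q.1 r.1 s.1
  + Complex.I * (acx A₁ A₂ p.2 q.1 r.1 s.1 + acx A₁ A₂ p.1 q.2 r.1 s.1
      + acx A₁ A₂ p.1 q.1 r.2 s.1 + acx A₁ A₂ p.1 q.1 r.1 s.2)
  - (acx A₁ A₂ p.2 q.2 r.1 s.1 + acx A₁ A₂ p.2 q.1 r.2 s.1 + acx A₁ A₂ p.2 q.1 r.1 s.2
      + acx A₁ A₂ p.1 q.2 r.2 s.1 + acx A₁ A₂ p.1 q.2 r.1 s.2 + acx A₁ A₂ p.1 q.1 r.2 s.2)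
  - Complex.I * (acx A₁ A₂ p.2 q.2 r.2 s.1 + acx A₁ A₂ p.2 q.2 r.1 s.2
      + acx A₁ A₂ p.2 q.1 r.2 s.2 + acx A₁ A₂ p.1 q.2 r.2 s.2)
  + acx A₁ A₂ p.2 q.2 r.2 s.2

/-- The curvature tensor `A := Re((A₁ + i·A₂)^ℂ)` of the model `M(V₀,g,A₁,A₂)`. -/
noncomputable def modelA {W : Type*} [AddCommGroup W] [Module ℝ W]
    (A₁ A₂ : W → W → W → W → ℝ) (p q r s : W × W) : ℝ :=
  (acExt A₁ A₂ p q r s).re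

/-- The inner product `⟨(x⁺,x⁻),(y⁺,y⁻)⟩ = g(x⁺,y⁺) − g(x⁻,y⁻)` of the model
`M(V₀,g,A₁,A₂)`. -/
def modelB {W : Type*} [AddCommGroup W] [Module ℝ W]
    (g : LinearMap.BilinForm ℝ W) (p q : W × W) : ℝ :=
  g p.1 q.1 - g p.2 q.2

/-- `f` is Einstein with Einstein constant `a` on the positive definite inner product
space `(W, g)`: for every `g`-orthonormal basis `{e_k}` one has
`Σ_k f(x, e_k, e_k, y) = a·g(x,y)`. -/
def IsEinsteinWith {W : Type*} [AddCommGroup W] [Module ℝ W]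
    (g : LinearMap.BilinForm ℝ W) (f : W → W → W → W → ℝ) (a : ℝ) : Prop :=
  ∀ (n : ℕ) (b : Module.Basis (Fin n) ℝ W),
    (∀ i j, g (b i) (b j) = if i = j then 1 else 0) →
    ∀ x y, (∑ k, f x (b k) (b k) y) = a * g x y

/-!
An isometry `Θ` of models preserves the Ricci tensor, which on `M(V₀,g,A₁,A₂)` is
`2a₁⟨u,v⟩ + 2a₂⟨Ju,v⟩`, `J` being multiplication by `i`. Hence
`a₂'·JΘ = (a₁ - a₁')·Θ + a₂·ΘJ`; squaring this with `J² = -1` and `a₂, a₂' > 0` forces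
`a₁ = a₁'`, `a₂ = a₂'` and `ΘJ = JΘ`, so `Θ` is complex linear and preserves `(A₁ + i·A₂)^ℂ`.
Since the real slice `W₀ × 0` is positive definite, `Θ⁻¹` maps it onto a graph `{(v, Tv)}`,
and evaluating the metric of the model on this graph and on its image under `J` shows that `T`
is a `g`-skew contraction. Conversely `(θ, T)` give the complex-linear isometry
`(θ × θ) ∘ ((1 + iT)^ℂ)⁻¹`, and complex multilinearity reduces the curvature identity to real
vectors.
-/

open Complex
open LinearMap (BilinForm)

section Complexification

variable {U W : Type*} [AddCommGroup U] [Module ℝ U] [AddCommGroup W] [Module ℝ W]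

variable (W) in
def mulI : W × W →ₗ[ℝ] W × W := (-LinearMap.snd ℝ W W).prod (LinearMap.fst ℝ W W)

@[simp] lemma mulI_apply (p : W × W) : mulI W p = (-p.2, p.1) := rfl

lemma mulI_mulI (p : W × W) : mulI W (mulI W p) = -p := by ext <;> simp

/-- Additivity and `i`-equivariance, without `ℝ`-homogeneity: enough to be determined by the
values on real vectors. -/
def IsCLinear (f : W × W → ℂ) : Prop :=
  (∀ p q, f (p + q) = f p + f q) ∧ ∀ p, f (mulI W p) = I * f p

namespace IsCLinear

variable {f f' : W × W → ℂ}

lemma apply_eq (hf : IsCLinear f) (p : W × W) : f p = f (p.1, 0) + I * f (p.2, 0) := by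
  rw [← hf.2, ← hf.1]
  simp

lemma ext_real (hf : IsCLinear f) (hf' : IsCLinear f') (h : ∀ x, f (x, 0) = f' (x, 0)) :
    f = f' := by
  ext1 p
  rw [hf.apply_eq, hf'.apply_eq, h, h]

lemma ext_re (hf : IsCLinear f) (hf' : IsCLinear f') (h : ∀ p, (f p).re = (f' p).re) :
    f = f' := by
  ext1 p
  -- `im z = -re (I * z)`, and `I * f p = f (mulI W p)`
  refine Complex.ext (h p) ?_
  have := h (mulI W p)
  rw [hf.2, hf'.2] at this
  simpa using this

lemma comp (hf : IsCLinear f) (L : U × U →ₗ[ℝ] W × W)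
    (hL : ∀ p, L (mulI U p) = mulI W (L p)) : IsCLinear (f ∘ L) :=
  ⟨fun p q => by simp [hf.1], fun p => by simp only [Function.comp_apply, hL, hf.2]⟩

end IsCLinear

def IsCMultilinear (F : W × W → W × W → W × W → W × W → ℂ) : Prop :=
  (∀ q r s, IsCLinear (F · q r s)) ∧ (∀ p r s, IsCLinear (F p · r s)) ∧
    (∀ p q s, IsCLinear (F p q · s)) ∧ ∀ p q r, IsCLinear (F p q r ·)

namespace IsCMultilinear

variable {F G : W × W → W × W → W × W → W × W → ℂ}

lemma eq_of_real (hF : IsCMultilinear F) (hG : IsCMultilinear G)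
    (h : ∀ a b c d, F (a, 0) (b, 0) (c, 0) (d, 0) = G (a, 0) (b, 0) (c, 0) (d, 0))
    (p q r s : W × W) : F p q r s = G p q r s := by
  obtain ⟨hF₁, hF₂, hF₃, hF₄⟩ := hF
  obtain ⟨hG₁, hG₂, hG₃, hG₄⟩ := hG
  have h₄ a b c s : F (a, 0) (b, 0) (c, 0) s = G (a, 0) (b, 0) (c, 0) s :=
    congrFun ((hF₄ _ _ _).ext_real (hG₄ _ _ _) (h a b c)) s
  have h₃ a b r s : F (a, 0) (b, 0) r s = G (a, 0) (b, 0) r s :=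
    congrFun ((hF₃ _ _ s).ext_real (hG₃ _ _ s) (h₄ a b · s)) r
  have h₂ a q r s : F (a, 0) q r s = G (a, 0) q r s :=
    congrFun ((hF₂ _ r s).ext_real (hG₂ _ r s) (h₃ a · r s)) q
  exact congrFun ((hF₁ q r s).ext_real (hG₁ q r s) (h₂ · q r s)) p

lemma comp (hF : IsCMultilinear F) (L : U × U →ₗ[ℝ] W × W)
    (hL : ∀ p, L (mulI U p) = mulI W (L p)) :
    IsCMultilinear fun p q r s => F (L p) (L q) (L r) (L s) :=
  ⟨fun _ _ _ => (hF.1 _ _ _).comp L hL, fun _ _ _ => (hF.2.1 _ _ _).comp L hL,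
    fun _ _ _ => (hF.2.2.1 _ _ _).comp L hL, fun _ _ _ => (hF.2.2.2 _ _ _).comp L hL⟩

end IsCMultilinear

lemma eq_zero_of_smul_eq_smul_mulI [Nontrivial (W × W)] {α β : ℝ}
    (h : ∀ p : W × W, α • p = β • mulI W p) : α = 0 ∧ β = 0 := by
  obtain ⟨p, hp⟩ := exists_ne (0 : W × W)
  have hsq : (α ^ 2 + β ^ 2) • p = 0 := by
    have h₁ := h p
    have h₂ := h (mulI W p)
    rw [mulI_mulI] at h₂
    linear_combination (norm := module) α • h₁ + β • h₂
  have : α ^ 2 + β ^ 2 = 0 := (smul_eq_zero.mp hsq).resolve_right hp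
  constructor <;> nlinarith [sq_nonneg α, sq_nonneg β]

lemma map_mulI_of_smul_mulI_map_eq (Θ : (U × U) ≃ₗ[ℝ] (W × W)) {a₂ a₂' c : ℝ}
    (ha₂ : 0 < a₂) (ha₂' : 0 < a₂')
    (h : ∀ u, a₂' • mulI W (Θ u) = c • Θ u + a₂ • Θ (mulI U u)) (u : U × U) :
    Θ (mulI U u) = mulI W (Θ u) := by
  rcases subsingleton_or_nontrivial (U × U) with hU | hU
  · rw [Subsingleton.elim u 0, map_zero, map_zero, map_zero]
  -- apply `mulI W` to the relation and use `mulI² = -1` on both sides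
  have hsq (u : U × U) : (a₂ ^ 2 - a₂' ^ 2 - c ^ 2) • u = (2 * c * a₂) • mulI U u := by
    apply Θ.injective
    have E₁ := h u
    have E₂ := congrArg (mulI W) (h u)
    have E₃ := h (mulI U u)
    simp only [map_add, map_smul, mulI_mulI, map_neg] at E₂ E₃
    rw [map_smul, map_smul]
    linear_combination (norm := module) a₂' • E₂ + c • E₁ + a₂ • E₃
  obtain ⟨hα, hβ⟩ := eq_zero_of_smul_eq_smul_mulI hsq
  have hc : c = 0 := by
    rcases mul_eq_zero.mp hβ with h | h
    · linarith
    · exact absurd h ha₂.ne'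
  have ha : a₂' = a₂ := by nlinarith
  have := h u
  rw [hc, ha, zero_smul, zero_add] at this
  exact (smul_right_injective _ ha₂.ne' this).symm

end Complexification

section CurvatureTensor

variable {W : Type*} [AddCommGroup W] [Module ℝ W] {A₁ A₂ : W → W → W → W → ℝ}

lemma IsML.map_neg {f : W → W → W → W → ℝ} (h : IsML f) :
    (∀ x y z w, f (-x) y z w = -f x y z w) ∧ (∀ x y z w, f x (-y) z w = -f x y z w) ∧
      (∀ x y z w, f x y (-z) w = -f x y z w) ∧ ∀ x y z w, f x y z (-w) = -f x y z w := by
  obtain ⟨-, h₁, -, h₂, -, h₃, -, h₄⟩ := h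
  exact ⟨fun x y z w => by simpa using h₁ (-1) x y z w,
    fun x y z w => by simpa using h₂ (-1) x y z w,
    fun x y z w => by simpa using h₃ (-1) x y z w,
    fun x y z w => by simpa using h₄ (-1) x y z w⟩

lemma IsML.map_zero {f : W → W → W → W → ℝ} (h : IsML f) :
    (∀ y z w, f 0 y z w = 0) ∧ (∀ x z w, f x 0 z w = 0) ∧
      (∀ x y w, f x y 0 w = 0) ∧ ∀ x y z, f x y z 0 = 0 := by
  obtain ⟨-, h₁, -, h₂, -, h₃, -, h₄⟩ := h
  exact ⟨fun y z w => by simpa using h₁ 0 0 y z w, fun x z w => by simpa using h₂ 0 x 0 z w,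
    fun x y w => by simpa using h₃ 0 x y 0 w, fun x y z => by simpa using h₄ 0 x y z 0⟩

variable (h₁ : IsML A₁) (h₂ : IsML A₂)
include h₁ h₂

lemma isCMultilinear_acExt : IsCMultilinear (acExt A₁ A₂) := by
  have hn₁ := h₁.map_neg
  have hn₂ := h₂.map_neg
  unfold IsML at h₁ h₂
  refine ⟨fun _ _ _ => ⟨?_, ?_⟩, fun _ _ _ => ⟨?_, ?_⟩, fun _ _ _ => ⟨?_, ?_⟩,
    fun _ _ _ => ⟨?_, ?_⟩⟩ <;> intros <;>
  simp only [acExt, acx, mulI_apply, Prod.fst_add, Prod.snd_add, h₁, h₂, hn₁, hn₂,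
    ofReal_add, ofReal_neg] <;>
  ring_nf <;> simp only [I_sq, I_pow_three] <;> ring

lemma acExt_smul₂ (c : ℝ) (p q r s : W × W) :
    acExt A₁ A₂ p (c • q) r s = c * acExt A₁ A₂ p q r s := by
  unfold IsML at h₁ h₂
  simp only [acExt, acx, Prod.smul_fst, Prod.smul_snd, h₁, h₂, ofReal_mul]
  ring

lemma acExt_smul₃ (c : ℝ) (p q r s : W × W) :
    acExt A₁ A₂ p q (c • r) s = c * acExt A₁ A₂ p q r s := by
  unfold IsML at h₁ h₂
  simp only [acExt, acx, Prod.smul_fst, Prod.smul_snd, h₁, h₂, ofReal_mul]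
  ring

lemma acExt_real (a b c d : W) :
    acExt A₁ A₂ (a, 0) (b, 0) (c, 0) (d, 0) = acx A₁ A₂ a b c d := by
  simp [acExt, acx, h₁.map_zero, h₂.map_zero]

end CurvatureTensor

section PseudoOrthonormal

variable {V ι : Type*} [AddCommGroup V] [Module ℝ V] [Fintype ι] [DecidableEq ι]
  {B : BilinForm ℝ V} {b : Module.Basis ι ℝ V} {ε : ι → ℝ}

lemma repr_eq_mul_of_pseudoOrthonormal (hε : ∀ i, ε i * ε i = 1)
    (hb : ∀ i j, B (b i) (b j) = if i = j then ε i else 0) (m : V) (i : ι) :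
    b.repr m i = ε i * B m (b i) := by
  conv_rhs => rw [← b.sum_repr m]
  simp only [map_sum, map_smul, LinearMap.coe_sum, Finset.sum_apply, LinearMap.smul_apply, hb,
    smul_eq_mul, mul_ite, mul_zero, Finset.sum_ite_eq', Finset.mem_univ, if_true]
  linear_combination -b.repr m i * hε i

lemma sum_mul_eq_trace_of_pseudoOrthonormal [FiniteDimensional ℝ V] (hB : B.Nondegenerate)
    (hε : ∀ i, ε i * ε i = 1) (hb : ∀ i j, B (b i) (b j) = if i = j then ε i else 0)
    (F : BilinForm ℝ V) :
    ∑ i, ε i * F (b i) (b i) =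
      LinearMap.trace ℝ V ((B.toDual hB).symm.toLinearMap ∘ₗ F) := by
  rw [LinearMap.trace_eq_matrix_trace ℝ b, Matrix.trace]
  refine Finset.sum_congr rfl fun i _ => ?_
  rw [Matrix.diag, LinearMap.toMatrix_apply, repr_eq_mul_of_pseudoOrthonormal hε hb]
  simp

end PseudoOrthonormal

lemma exists_basis_orthonormal {V : Type*} [AddCommGroup V] [Module ℝ V] [FiniteDimensional ℝ V]
    {g : BilinForm ℝ V} (hsymm : ∀ x y, g x y = g y x) (hpos : ∀ x : V, x ≠ 0 → 0 < g x x) :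
    ∃ b : Module.Basis (Fin (Module.finrank ℝ V)) ℝ V,
      ∀ i j, g (b i) (b j) = if i = j then 1 else 0 := by
  let core : InnerProductSpace.Core ℝ V :=
    { inner x y := g x y
      conj_inner_symm x y := by simpa using hsymm y x
      re_inner_nonneg x := by
        rcases eq_or_ne x 0 with rfl | hx
        · simp
        · exact (hpos x hx).le
      definite x hx := by
        by_contra h
        exact (hpos x h).ne' hx
      add_left x y z := by simp
      smul_left x y r := by simp }
  let : NormedAddCommGroup V := core.toNormedAddCommGroup
  let : InnerProductSpace ℝ V := InnerProductSpace.ofCore core.toCore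
  refine ⟨(stdOrthonormalBasis ℝ V).toBasis, fun i j => ?_⟩
  rw [OrthonormalBasis.coe_toBasis]
  exact orthonormal_iff_ite.1 (stdOrthonormalBasis ℝ V).orthonormal i j

section Model

variable {W : Type*} [AddCommGroup W] [Module ℝ W]

def modelBForm (g : BilinForm ℝ W) : BilinForm ℝ (W × W) :=
  g.compl₁₂ (LinearMap.fst ℝ W W) (LinearMap.fst ℝ W W) -
    g.compl₁₂ (LinearMap.snd ℝ W W) (LinearMap.snd ℝ W W)

@[simp] lemma modelBForm_apply (g : BilinForm ℝ W) (p q : W × W) :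
    modelBForm g p q = modelB g p q := rfl

lemma modelBForm_nondegenerate {g : BilinForm ℝ W} (hpos : ∀ x : W, x ≠ 0 → 0 < g x x) :
    (modelBForm g).Nondegenerate := by
  have hself (x : W) (hx : g x x = 0) : x = 0 := by
    by_contra h
    exact (hpos x h).ne' hx
  constructor <;> intro p hp <;> refine Prod.ext (hself _ ?_) (hself _ ?_)
  · simpa [modelB] using hp (p.1, 0)
  · simpa [modelB] using hp (0, p.2)
  · simpa [modelB] using hp (p.1, 0)
  · simpa [modelB] using hp (0, p.2)

def prodSign {ι : Type*} : ι ⊕ ι → ℝ := Sum.elim (fun _ => 1) fun _ => -1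

lemma prodSign_mul_self {ι : Type*} (i : ι ⊕ ι) : prodSign i * prodSign i = 1 := by
  cases i <;> simp [prodSign]

lemma modelBForm_prod_basis {g : BilinForm ℝ W} {ι : Type*} [DecidableEq ι]
    {e : Module.Basis ι ℝ W} (he : ∀ i j, g (e i) (e j) = if i = j then 1 else 0)
    (i j : ι ⊕ ι) :
    modelBForm g (e.prod e i) (e.prod e j) = if i = j then prodSign i else 0 := by
  rcases i with i | i <;> rcases j with j | j <;> simp [modelB, prodSign, he, apply_ite]

variable {A₁ A₂ : W → W → W → W → ℝ} (h₁ : IsML A₁) (h₂ : IsML A₂)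

noncomputable def modelAForm (u v : W × W) : BilinForm ℝ (W × W) :=
  LinearMap.mk₂ ℝ (fun z w => modelA A₁ A₂ u z w v)
    (fun z z' w => by simp [modelA, ((isCMultilinear_acExt h₁ h₂).2.1 _ _ _).1])
    (fun c z w => by simp [modelA, acExt_smul₂ h₁ h₂])
    (fun z w w' => by simp [modelA, ((isCMultilinear_acExt h₁ h₂).2.2.1 _ _ _).1])
    (fun c z w => by simp [modelA, acExt_smul₃ h₁ h₂])

@[simp] lemma modelAForm_apply (u v z w : W × W) :
    modelAForm h₁ h₂ u v z w = modelA A₁ A₂ u z w v := rfl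

include h₁ h₂ in
lemma sum_modelA_prod_basis {g : BilinForm ℝ W} {n : ℕ} {e : Module.Basis (Fin n) ℝ W}
    {a₁ a₂ : ℝ} (he₁ : ∀ x y, ∑ k, A₁ x (e k) (e k) y = a₁ * g x y)
    (he₂ : ∀ x y, ∑ k, A₂ x (e k) (e k) y = a₂ * g x y) (u v : W × W) :
    ∑ i, prodSign i * modelA A₁ A₂ u (e.prod e i) (e.prod e i) v =
      2 * (a₁ * modelB g u v + a₂ * modelB g (mulI W u) v) := by
  have hz₁ := h₁.map_zero
  have hz₂ := h₂.map_zero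
  have hre (x : W) : modelA A₁ A₂ u (x, 0) (x, 0) v =
      A₁ u.1 x x v.1 - A₂ u.2 x x v.1 - A₂ u.1 x x v.2 - A₁ u.2 x x v.2 := by
    simp only [modelA, acExt, acx, hz₁, hz₂, ofReal_zero, mul_zero, add_zero, zero_add, sub_zero,
      add_re, sub_re, mul_re, add_im, mul_im, I_re, I_im, ofReal_re, ofReal_im]
    ring
  have him (x : W) : modelA A₁ A₂ u (0, x) (0, x) v = -modelA A₁ A₂ u (x, 0) (x, 0) v := by
    simp only [modelA, acExt, acx, hz₁, hz₂, ofReal_zero, mul_zero, add_zero, zero_add, sub_zero,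
      zero_sub, neg_re, add_re, sub_re, mul_re, add_im, mul_im, I_re, I_im, ofReal_re, ofReal_im]
    ring
  simp only [Fintype.sum_sum_type, prodSign, Sum.elim_inl, Sum.elim_inr, Module.Basis.prod_apply,
    LinearMap.coe_inl, LinearMap.coe_inr, Function.comp_apply, him, hre, one_mul, neg_one_mul,
    neg_neg, Finset.sum_sub_distrib, he₁, he₂, modelB, mulI_apply, map_neg, LinearMap.neg_apply]
  ring

end Model

section ModelIsometry

variable {V W : Type*} [AddCommGroup V] [Module ℝ V] [FiniteDimensional ℝ V]
  [AddCommGroup W] [Module ℝ W] [FiniteDimensional ℝ W]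
  {g : BilinForm ℝ V} {g' : BilinForm ℝ W}
  {A₁ A₂ : V → V → V → V → ℝ} {A₁' A₂' : W → W → W → W → ℝ} {a₁ a₂ a₁' a₂' : ℝ}
  {Θ : (V × V) ≃ₗ[ℝ] (W × W)}

lemma modelB_ricci_eq_of_isometry
    (hgsymm : ∀ x y, g x y = g y x) (hgpos : ∀ x : V, x ≠ 0 → 0 < g x x)
    (hg'symm : ∀ x y, g' x y = g' y x) (hg'pos : ∀ x : W, x ≠ 0 → 0 < g' x x)
    (hA₁ : IsML A₁) (hA₂ : IsML A₂) (hA₁' : IsML A₁') (hA₂' : IsML A₂')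
    (hE₁ : IsEinsteinWith g A₁ a₁) (hE₂ : IsEinsteinWith g A₂ a₂)
    (hE₁' : IsEinsteinWith g' A₁' a₁') (hE₂' : IsEinsteinWith g' A₂' a₂')
    (hB : ∀ p q, modelB g' (Θ p) (Θ q) = modelB g p q)
    (hA : ∀ p q r s, modelA A₁' A₂' (Θ p) (Θ q) (Θ r) (Θ s) = modelA A₁ A₂ p q r s)
    (u v : V × V) :
    a₁ * modelB g u v + a₂ * modelB g (mulI V u) v =
      a₁' * modelB g' (Θ u) (Θ v) + a₂' * modelB g' (mulI W (Θ u)) (Θ v) := by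
  obtain ⟨e, he⟩ := exists_basis_orthonormal hgsymm hgpos
  obtain ⟨e', he'⟩ := exists_basis_orthonormal hg'symm hg'pos
  have hΘe (i j) : modelBForm g' ((e.prod e).map Θ i) ((e.prod e).map Θ j) =
      if i = j then prodSign i else 0 := by
    simpa [hB] using modelBForm_prod_basis he i j
  -- the Ricci contraction of the model does not depend on the pseudo-orthonormal basis
  have htrace := (sum_mul_eq_trace_of_pseudoOrthonormal (modelBForm_nondegenerate hg'pos)
      prodSign_mul_self hΘe (modelAForm hA₁' hA₂' (Θ u) (Θ v))).trans
    (sum_mul_eq_trace_of_pseudoOrthonormal (modelBForm_nondegenerate hg'pos)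
      prodSign_mul_self (modelBForm_prod_basis he') _).symm
  simp only [modelAForm_apply, Module.Basis.map_apply, hA] at htrace
  rw [sum_modelA_prod_basis hA₁ hA₂ (hE₁ _ e he) (hE₂ _ e he),
    sum_modelA_prod_basis hA₁' hA₂' (hE₁' _ e' he') (hE₂' _ e' he')] at htrace
  linarith

lemma exists_map_graph_eq (hgpos : ∀ x : V, x ≠ 0 → 0 < g x x)
    (hg'pos : ∀ x : W, x ≠ 0 → 0 < g' x x) (hB : ∀ p q, modelB g' (Θ p) (Θ q) = modelB g p q) :
    ∃ (θ : V ≃ₗ[ℝ] W) (T : V →ₗ[ℝ] V), ∀ v, Θ (v, T v) = (θ v, 0) := by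
  let σ : W →ₗ[ℝ] V × V := Θ.symm.toLinearMap ∘ₗ LinearMap.inl ℝ W W
  have hπ : Function.Injective (LinearMap.fst ℝ V V ∘ₗ σ) := by
    refine (injective_iff_map_eq_zero _).2 fun w hw => ?_
    by_contra hne
    have hσ := hB (σ w) (σ w)
    simp only [σ, LinearMap.comp_apply, LinearEquiv.coe_coe, LinearEquiv.apply_symm_apply,
      LinearMap.inl_apply, LinearMap.fst_apply] at hσ hw
    have hpos := hg'pos w hne
    have hnonneg : 0 ≤ g (Θ.symm (w, 0)).2 (Θ.symm (w, 0)).2 := by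
      rcases eq_or_ne (Θ.symm (w, 0)).2 0 with h | h
      · simp [h]
      · exact (hgpos _ h).le
    simp only [modelB, hw, map_zero, sub_zero] at hσ
    linarith
  have hrank : Module.finrank ℝ W = Module.finrank ℝ V := by
    have := Θ.finrank_eq
    rw [Module.finrank_prod, Module.finrank_prod] at this
    omega
  let θ := (LinearMap.linearEquivOfInjective _ hπ hrank).symm
  refine ⟨θ, LinearMap.snd ℝ V V ∘ₗ σ ∘ₗ θ.toLinearMap, fun v => ?_⟩
  rw [← Θ.apply_symm_apply (θ v, 0)]
  congr 1
  refine Prod.ext ?_ rfl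
  exact ((LinearMap.linearEquivOfInjective _ hπ hrank).apply_symm_apply v).symm

lemma exists_skew_contraction_of_modelIso
    (hgsymm : ∀ x y, g x y = g y x) (hgpos : ∀ x : V, x ≠ 0 → 0 < g x x)
    (hg'symm : ∀ x y, g' x y = g' y x) (hg'pos : ∀ x : W, x ≠ 0 → 0 < g' x x)
    (hA₁ : IsML A₁) (hA₂ : IsML A₂) (hA₁' : IsML A₁') (hA₂' : IsML A₂')
    (ha₂ : 0 < a₂) (ha₂' : 0 < a₂')
    (hE₁ : IsEinsteinWith g A₁ a₁) (hE₂ : IsEinsteinWith g A₂ a₂)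
    (hE₁' : IsEinsteinWith g' A₁' a₁') (hE₂' : IsEinsteinWith g' A₂' a₂')
    (hB : ∀ p q, modelB g' (Θ p) (Θ q) = modelB g p q)
    (hA : ∀ p q r s, modelA A₁' A₂' (Θ p) (Θ q) (Θ r) (Θ s) = modelA A₁ A₂ p q r s) :
    ∃ (θ : V ≃ₗ[ℝ] W) (T : V →ₗ[ℝ] V),
      (∀ v w, g (T v) w + g v (T w) = 0) ∧
      (∀ v : V, v ≠ 0 → g (T v) (T v) < g v v) ∧
      (∀ v w, g' (θ v) (θ w) = g v w - g (T v) (T w)) ∧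
      (∀ v w x y : V,
        acx A₁' A₂' (θ v) (θ w) (θ x) (θ y) =
          acExt A₁ A₂ (v, T v) (w, T w) (x, T x) (y, T y)) := by
  have hJ : ∀ u, Θ (mulI V u) = mulI W (Θ u) := by
    refine map_mulI_of_smul_mulI_map_eq Θ ha₂ ha₂' (c := a₁ - a₁') fun u => ?_
    refine (sub_eq_zero.mp ((modelBForm_nondegenerate hg'pos).1 _ fun q => ?_)).symm
    obtain ⟨v, rfl⟩ := Θ.surjective q
    have := modelB_ricci_eq_of_isometry hgsymm hgpos hg'symm hg'pos hA₁ hA₂ hA₁' hA₂'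
      hE₁ hE₂ hE₁' hE₂' hB hA u v
    rw [hB] at this
    simp only [map_sub, map_add, map_smul, LinearMap.sub_apply, LinearMap.add_apply,
      LinearMap.smul_apply, smul_eq_mul, modelBForm_apply, hB]
    linarith
  have hC (p q r s) : acExt A₁' A₂' (Θ p) (Θ q) (Θ r) (Θ s) = acExt A₁ A₂ p q r s :=
    congrFun ((((isCMultilinear_acExt hA₁' hA₂').1 _ _ _).comp Θ.toLinearMap hJ).ext_re
      ((isCMultilinear_acExt hA₁ hA₂).1 q r s) fun p => hA p q r s) p
  obtain ⟨θ, T, hΘ⟩ := exists_map_graph_eq hgpos hg'pos hB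
  have hΘJ (v : V) : Θ (mulI V (v, T v)) = (0, θ v) := by
    rw [hJ, hΘ, mulI_apply, neg_zero]
  refine ⟨θ, T, fun v w => ?_, fun v hv => ?_, fun v w => ?_, fun v w x y => ?_⟩
  · have := hB (v, T v) (mulI V (w, T w))
    rw [hΘ, hΘJ] at this
    simp only [modelB, mulI_apply, map_zero, map_neg, LinearMap.zero_apply] at this
    linarith
  · have := hB (v, T v) (v, T v)
    simp only [hΘ, modelB, map_zero] at this
    have := hg'pos (θ v) (θ.map_ne_zero_iff.mpr hv)
    linarith
  · have := hB (v, T v) (w, T w)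
    simp only [hΘ, modelB, map_zero] at this
    linarith
  · rw [← acExt_real hA₁' hA₂', ← hΘ, ← hΘ, ← hΘ, ← hΘ, hC]

end ModelIsometry

section Twist

variable {V W : Type*} [AddCommGroup V] [Module ℝ V] [AddCommGroup W] [Module ℝ W]
  {g : BilinForm ℝ V} {T : V →ₗ[ℝ] V}

/-- The complexification of `1 + iT`. -/
def twistMap (T : V →ₗ[ℝ] V) : V × V →ₗ[ℝ] V × V := LinearMap.id + mulI V ∘ₗ T.prodMap T

lemma twistMap_apply (p : V × V) : twistMap T p = (p.1 - T p.2, p.2 + T p.1) := by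
  ext <;> simp [twistMap, sub_eq_add_neg]

lemma twistMap_mulI (p : V × V) : twistMap T (mulI V p) = mulI V (twistMap T p) := by
  ext <;> simp only [mulI_apply, twistMap_apply, map_neg] <;> abel

lemma twistMap_injective (hskew : ∀ v w, g (T v) w + g v (T w) = 0)
    (hcontr : ∀ v : V, v ≠ 0 → g (T v) (T v) < g v v) : Function.Injective (twistMap T) := by
  refine (injective_iff_map_eq_zero _).2 fun p hp => ?_
  obtain ⟨h₁, h₂⟩ := Prod.ext_iff.mp ((twistMap_apply p).symm.trans hp)
  have hp₂ : p.2 = -T p.1 := eq_neg_of_add_eq_zero_left h₂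
  have hp₁ : p.1 = -T (T p.1) := by
    simpa [hp₂] using sub_eq_zero.mp h₁
  have hp₁0 : p.1 = 0 := by
    by_contra hne
    have := hskew (T p.1) p.1
    have hself : g p.1 p.1 = -g (T (T p.1)) p.1 := by
      simpa using congrArg (g · p.1) hp₁
    linarith [hcontr p.1 hne]
  simp [Prod.ext_iff, hp₁0, hp₂]

lemma modelB_prodMap_eq_twistMap {g' : BilinForm ℝ W} {θ : V →ₗ[ℝ] W}
    (hskew : ∀ v w, g (T v) w + g v (T w) = 0)
    (hmet : ∀ v w, g' (θ v) (θ w) = g v w - g (T v) (T w)) (p q : V × V) :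
    modelB g' (θ.prodMap θ p) (θ.prodMap θ q) = modelB g (twistMap T p) (twistMap T q) := by
  simp only [modelB, LinearMap.prodMap_apply, twistMap_apply, hmet, map_add, map_sub,
    LinearMap.add_apply, LinearMap.sub_apply]
  linarith [hskew p.1 q.2, hskew p.2 q.1]

lemma exists_modelIso_of_skew_contraction [FiniteDimensional ℝ V]
    {g' : BilinForm ℝ W} {A₁ A₂ : V → V → V → V → ℝ} (hA₁ : IsML A₁) (hA₂ : IsML A₂)
    {A₁' A₂' : W → W → W → W → ℝ} (hA₁' : IsML A₁') (hA₂' : IsML A₂')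
    (θ : V ≃ₗ[ℝ] W) (hskew : ∀ v w, g (T v) w + g v (T w) = 0)
    (hcontr : ∀ v : V, v ≠ 0 → g (T v) (T v) < g v v)
    (hmet : ∀ v w, g' (θ v) (θ w) = g v w - g (T v) (T w))
    (hcurv : ∀ v w x y : V,
      acx A₁' A₂' (θ v) (θ w) (θ x) (θ y) = acExt A₁ A₂ (v, T v) (w, T w) (x, T x) (y, T y)) :
    ∃ Θ : (V × V) ≃ₗ[ℝ] (W × W),
      (∀ p q : V × V, modelB g' (Θ p) (Θ q) = modelB g p q) ∧
      (∀ p q r s : V × V,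
        modelA A₁' A₂' (Θ p) (Θ q) (Θ r) (Θ s) = modelA A₁ A₂ p q r s) := by
  let Φ := LinearEquiv.ofInjectiveEndo _ (twistMap_injective hskew hcontr)
  let θθ : V × V →ₗ[ℝ] W × W := θ.toLinearMap.prodMap θ.toLinearMap
  -- on real vectors `Φ (x, 0) = (x, T x)`, so both sides reduce to `hcurv`
  have hC : ∀ p q r s, acExt A₁' A₂' (θθ p) (θθ q) (θθ r) (θθ s) =
      acExt A₁ A₂ (Φ p) (Φ q) (Φ r) (Φ s) :=
    ((isCMultilinear_acExt hA₁' hA₂').comp θθ fun p => by simp [θθ]).eq_of_real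
      ((isCMultilinear_acExt hA₁ hA₂).comp Φ.toLinearMap twistMap_mulI) fun a b c d => by
        simpa [θθ, Φ, twistMap_apply, acExt_real hA₁' hA₂'] using hcurv a b c d
  refine ⟨Φ.symm.trans (θ.prodCongr θ), fun p q => ?_, fun p q r s => ?_⟩
  · obtain ⟨p, rfl⟩ := Φ.surjective p
    obtain ⟨q, rfl⟩ := Φ.surjective q
    rw [LinearEquiv.trans_apply, LinearEquiv.trans_apply, Φ.symm_apply_apply, Φ.symm_apply_apply]
    exact modelB_prodMap_eq_twistMap hskew hmet p q
  · obtain ⟨p, rfl⟩ := Φ.surjective p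
    obtain ⟨q, rfl⟩ := Φ.surjective q
    obtain ⟨r, rfl⟩ := Φ.surjective r
    obtain ⟨s, rfl⟩ := Φ.surjective s
    simp only [LinearEquiv.trans_apply, Φ.symm_apply_apply, modelA]
    exact congrArg Complex.re (hC p q r s)

end Twist

theorem statement9
    {V₀ : Type*} [AddCommGroup V₀] [Module ℝ V₀] [FiniteDimensional ℝ V₀]
    {W₀ : Type*} [AddCommGroup W₀] [Module ℝ W₀] [FiniteDimensional ℝ W₀]
    (g : LinearMap.BilinForm ℝ V₀)
    (hgsymm : ∀ x y, g x y = g y x)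
    (hgpos : ∀ x : V₀, x ≠ 0 → 0 < g x x)
    (g' : LinearMap.BilinForm ℝ W₀)
    (hg'symm : ∀ x y, g' x y = g' y x)
    (hg'pos : ∀ x : W₀, x ≠ 0 → 0 < g' x x)
    (A₁ A₂ : V₀ → V₀ → V₀ → V₀ → ℝ) (hA₁ : IsACT A₁) (hA₂ : IsACT A₂)
    (A₁' A₂' : W₀ → W₀ → W₀ → W₀ → ℝ) (hA₁' : IsACT A₁') (hA₂' : IsACT A₂')
    (a₁ a₂ : ℝ) (ha₂ : 0 < a₂)
    (hE₁ : IsEinsteinWith g A₁ a₁) (hE₂ : IsEinsteinWith g A₂ a₂)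
    (a₁' a₂' : ℝ) (ha₂' : 0 < a₂')
    (hE₁' : IsEinsteinWith g' A₁' a₁') (hE₂' : IsEinsteinWith g' A₂' a₂') :
    (∃ Θ : (V₀ × V₀) ≃ₗ[ℝ] (W₀ × W₀),
      (∀ p q : V₀ × V₀, modelB g' (Θ p) (Θ q) = modelB g p q) ∧
      (∀ p q r s : V₀ × V₀,
        modelA A₁' A₂' (Θ p) (Θ q) (Θ r) (Θ s) = modelA A₁ A₂ p q r s)) ↔
    (∃ (θ : V₀ ≃ₗ[ℝ] W₀) (T : V₀ →ₗ[ℝ] V₀),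
      (∀ v w, g (T v) w + g v (T w) = 0) ∧
      (∀ v : V₀, v ≠ 0 → g (T v) (T v) < g v v) ∧
      (∀ v w, g' (θ v) (θ w) = g v w - g (T v) (T w)) ∧
      (∀ v w x y : V₀,
        acx A₁' A₂' (θ v) (θ w) (θ x) (θ y) =
          acExt A₁ A₂ (v, T v) (w, T w) (x, T x) (y, T y))) :=
  ⟨fun ⟨_, hB, hA⟩ => exists_skew_contraction_of_modelIso hgsymm hgpos hg'symm hg'pos hA₁.1 hA₂.1
      hA₁'.1 hA₂'.1 ha₂ ha₂' hE₁ hE₂ hE₁' hE₂' hB hA,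
    fun ⟨θ, _, hskew, hcontr, hmet, hcurv⟩ => exists_modelIso_of_skew_contraction hA₁.1 hA₂.1
      hA₁'.1 hA₂'.1 θ hskew hcontr hmet hcurv⟩
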